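/- arXiv:2212.13507 — 2 statements merged into one kernel-verified Lean document; each statement's English description precedes it below -/
import Mathlib

section
/- Let δ ∈ (0, 1/2] and G_δ(s) = s/δ + ln δ - 1 for s < δ, G_δ(s) = ln s for s ≥ δ. Then for every real s, s - G_δ(s) ≥ |s|/2. -/
/-! On the logarithmic branch, `log s ≤ s / 2` is `log (s / 2) ≤ s / 2 - 1` plus `log 2 ≤ 1`.
On the affine branch, `s - G_δ(s) = (1 - 1/δ) s + 1 - log δ`, whose slope is at most `-1`
and whose value at `0` is at least `1`; for `0 ≤ s < δ` the term `s / δ` stays below `1`. -/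

open Real

theorem Real.log_le_half_self {x : ℝ} (hx : 0 < x) : log x ≤ x / 2 := by
  have h2 : log 2 ≤ 1 := by linarith [log_le_sub_one_of_pos (two_pos : (0 : ℝ) < 2)]
  have hhalf := log_le_sub_one_of_pos (half_pos hx)
  rw [log_div hx.ne' two_ne_zero] at hhalf
  linarith

theorem half_abs_le_sub_log {x : ℝ} (hx : 0 < x) : |x| / 2 ≤ x - log x := by
  rw [abs_of_pos hx]
  linarith [log_le_half_self hx]

theorem div_le_two_mul_of_nonpos {δ s : ℝ} (hδ0 : 0 < δ) (hδ1 : δ ≤ 1 / 2) (hs : s ≤ 0) :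
    s / δ ≤ 2 * s := by
  rw [div_le_iff₀ hδ0]
  nlinarith

theorem half_abs_le_sub_affine_branch {δ s : ℝ} (hδ0 : 0 < δ) (hδ1 : δ ≤ 1 / 2) (hs : s < δ) :
    |s| / 2 ≤ s - (s / δ + log δ - 1) := by
  have hlogδ : log δ ≤ 0 := log_nonpos hδ0.le (by linarith)
  rcases le_or_gt 0 s with hs0 | hs0
  · have : s / δ < 1 := (div_lt_one hδ0).mpr hs
    rw [abs_of_nonneg hs0]
    linarith
  · rw [abs_of_neg hs0]
    linarith [div_le_two_mul_of_nonpos hδ0 hδ1 hs0.le]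

/-- For `δ ∈ (0, 1/2]` and the regularized logarithm
`G_δ(s) = s/δ + log δ - 1` for `s < δ`, `G_δ(s) = log s` for `s ≥ δ`,
one has `s - G_δ(s) ≥ |s|/2` for every real `s`. -/
theorem sub_Gdelta_ge_half_abs (δ : ℝ) (hδ0 : 0 < δ) (hδ1 : δ ≤ 1 / 2) (s : ℝ) :
    |s| / 2 ≤ s - (if s < δ then s / δ + Real.log δ - 1 else Real.log s) := by
  split_ifs with hs
  · exact half_abs_le_sub_affine_branch hδ0 hδ1 hs
  · exact half_abs_le_sub_log (hδ0.trans_le (not_lt.mp hs))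
end

section
/- Let δ ∈ (0, 1/2] and G_δ as above, with G_δ'(s) = 1/δ for s < δ and 1/s for s ≥ δ. Then for every real s, s·(1 - G_δ'(s)) ≥ |s|/2 - 1. -/
/-!
Below `δ`, `s * (1 - G_δ'(s))` is linear in `s` with slope `1 - 1/δ ≤ -1/2`, which dominates
`|s|/2` for `s < 0`, while for `0 ≤ s < δ` one has `s/δ < 1`. From `δ` on it equals `s - 1`.
-/

lemma abs_div_two_sub_one_le_mul_one_sub_one_div_of_lt {δ s : ℝ} (hδ0 : 0 < δ)
    (hδ : δ ≤ 2 / 3) (hs : s < δ) : |s| / 2 - 1 ≤ s * (1 - 1 / δ) := by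
  rcases le_or_gt 0 s with hs0 | hs0
  · have hsδ : s / δ < 1 := (div_lt_one hδ0).2 hs
    rw [abs_of_nonneg hs0, mul_sub, mul_one_div]
    linarith
  · have hinv : 3 / 2 ≤ 1 / δ := by rw [le_div_iff₀ hδ0]; linarith
    rw [abs_of_neg hs0]
    nlinarith

lemma abs_div_two_sub_one_le_mul_one_sub_one_div_self {s : ℝ} (hs : 0 < s) :
    |s| / 2 - 1 ≤ s * (1 - 1 / s) := by
  rw [abs_of_pos hs, mul_sub, mul_one_div, div_self hs.ne']
  linarith

/-- For `δ ∈ (0, 1/2]` and the derivative `G_δ'(s) = 1/δ` for `s < δ`, `G_δ'(s) = 1/s` for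
`s ≥ δ`, of the regularized logarithm, one has `s·(1 - G_δ'(s)) ≥ |s|/2 - 1` for every real `s`. -/
theorem mul_one_sub_Gderiv_ge (δ : ℝ) (hδ0 : 0 < δ) (hδ1 : δ ≤ 1 / 2) (s : ℝ) :
    |s| / 2 - 1 ≤ s * (1 - (if s < δ then 1 / δ else 1 / s)) := by
  split_ifs with hs
  · exact abs_div_two_sub_one_le_mul_one_sub_one_div_of_lt hδ0 (by linarith) hs
  · exact abs_div_two_sub_one_le_mul_one_sub_one_div_self (hδ0.trans_le (not_lt.1 hs))
end
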